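/- There exist absolute constants C₀ > 0 and γ₀ > 0 such that for every γ > γ₀ and every unidirectional Stokes wave solution (ψ, η, r) with R(s_c) < r < R(0), the vertical velocity at the bottom satisfies ψ_y(x, 0) ≤ C₀/γ uniformly in x ∈ ℝ. -/

import Mathlib

noncomputable section

open Real Set

/-- Partial derivative of `ψ` in the horizontal variable. -/
def px (ψ : ℝ → ℝ → ℝ) (x y : ℝ) : ℝ := deriv (fun t => ψ t y) x

/-- Partial derivative of `ψ` in the vertical variable. -/
def py (ψ : ℝ → ℝ → ℝ) (x y : ℝ) : ℝ := deriv (fun t => ψ x t) y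

/-- Second partial derivative in `x`. -/
def pxx (ψ : ℝ → ℝ → ℝ) (x y : ℝ) : ℝ := deriv (fun t => px ψ t y) x

/-- Second partial derivative in `y`. -/
def pyy (ψ : ℝ → ℝ → ℝ) (x y : ℝ) : ℝ := deriv (fun t => py ψ x t) y

/-- Depth `d(s)` of the laminar (stream) flow with surface value `s` of `ψ_y`. -/
def lamDepth (γ s : ℝ) : ℝ := (-s + Real.sqrt (s ^ 2 + 2 * γ)) / γ

/-- Bernoulli constant `R(s) = ½ s² + γ + d(s)` of the laminar flow. -/
def bernR (γ s : ℝ) : ℝ := s ^ 2 / 2 + γ + lamDepth γ s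

/-- `s` is the (unique) positive critical point `s_c` of `R`, characterized by the
equation `s - 1/γ + s/(γ √(s² + 2γ)) = 0`. -/
def IsCrit (γ s : ℝ) : Prop :=
  0 < s ∧ s - 1 / γ + s / (γ * Real.sqrt (s ^ 2 + 2 * γ)) = 0

/-- A solution `(ψ, η, r)` of the stream-function formulation with constant adverse
vorticity `ω = -γ`:  `Δψ = γ` in the fluid domain `D_η`, the Bernoulli condition on the
surface, `ψ = 1` on the surface and `ψ = 0` on the flat bottom. -/
structure StreamSolution (γ : ℝ) (ψ : ℝ → ℝ → ℝ) (η : ℝ → ℝ) (r : ℝ) : Prop where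
  eta_smooth : ContDiff ℝ (⊤ : ℕ∞) η
  eta_pos : ∀ x, 0 < η x
  psi_smooth : ContDiff ℝ (⊤ : ℕ∞) (fun p : ℝ × ℝ => ψ p.1 p.2)
  laplace : ∀ x y, 0 < y → y < η x → pxx ψ x y + pyy ψ x y = γ
  bernoulli : ∀ x, (px ψ x (η x)) ^ 2 / 2 + (py ψ x (η x)) ^ 2 / 2 + η x = r
  surface_val : ∀ x, ψ x (η x) = 1
  bottom_val : ∀ x, ψ x 0 = 0

/-- The flow is unidirectional: `ψ_y > 0` everywhere in the fluid domain `D_η`. -/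
def Unidirectional (ψ : ℝ → ℝ → ℝ) (η : ℝ → ℝ) : Prop :=
  ∀ x y, 0 < y → y < η x → 0 < py ψ x y

/-- A Stokes wave with half-period `Λ`: the solution is `2Λ`-periodic and even in `x`,
and the surface profile is strictly decreasing from the crest (`x = 0`) to the
trough (`x = Λ`).  Thus `η̂ = max η = η 0` and `η̌ = min η = η Λ`. -/
structure StokesWave (γ : ℝ) (ψ : ℝ → ℝ → ℝ) (η : ℝ → ℝ) (r Λ : ℝ) : Prop where
  sol : StreamSolution γ ψ η r
  lam_pos : 0 < Λ
  eta_periodic : ∀ x, η (x + 2 * Λ) = η x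
  eta_even : ∀ x, η (-x) = η x
  psi_periodic : ∀ x y, ψ (x + 2 * Λ) y = ψ x y
  psi_even : ∀ x y, ψ (-x) y = ψ x y
  eta_anti : StrictAntiOn η (Set.Icc 0 Λ)

/-- A solitary wave (relative to the critical value `sc = s_c` of `γ`): the solution is
even in `x`, the profile is strictly decreasing on `(0, ∞)` and non-constant, and the
flow converges to a supercritical laminar flow `(U(·; s), d(s))` with `s > s_c`,
`R(s) = r` as `|x| → ∞`.  The crest is at `x = 0`, `η̂ = η 0` and `η̌ = inf η = d(s)`. -/
structure SolitaryWave (γ sc : ℝ) (ψ : ℝ → ℝ → ℝ) (η : ℝ → ℝ) (r : ℝ) : Prop where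
  sol : StreamSolution γ ψ η r
  eta_even : ∀ x, η (-x) = η x
  psi_even : ∀ x y, ψ (-x) y = ψ x y
  eta_anti : StrictAntiOn η (Set.Ioi 0)
  nonconst : ∃ x₁ x₂, η x₁ ≠ η x₂
  asymptotic : ∃ s, sc < s ∧ bernR γ s = r ∧
    ∀ ε > 0, ∃ X : ℝ, ∀ x : ℝ, X ≤ |x| →
      |η x - lamDepth γ s| ≤ ε ∧
      ∀ y ∈ Set.Icc 0 (η x), |px ψ x y| + |py ψ x y - (γ * y + s)| ≤ ε

/- ===== Auxiliary machinery ===== -/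

section Helpers

open Filter Topology

/-- Directional derivative in the first coordinate. -/
def Dx (f : ℝ × ℝ → ℝ) (p : ℝ × ℝ) : ℝ := fderiv ℝ f p (1, 0)

/-- Directional derivative in the second coordinate. -/
def Dy (f : ℝ × ℝ → ℝ) (p : ℝ × ℝ) : ℝ := fderiv ℝ f p (0, 1)

theorem sliceX (f : ℝ × ℝ → ℝ) (hf : ContDiff ℝ (⊤ : ℕ∞) f) (x y : ℝ) :
    HasDerivAt (fun t => f (t, y)) (Dx f (x, y)) x :=
  ((hf.differentiable (by simp)) (x, y)).hasFDerivAt.comp_hasDerivAt x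
    ((hasDerivAt_id x).prodMk (hasDerivAt_const x y))

theorem sliceY (f : ℝ × ℝ → ℝ) (hf : ContDiff ℝ (⊤ : ℕ∞) f) (x y : ℝ) :
    HasDerivAt (fun t => f (x, t)) (Dy f (x, y)) y :=
  ((hf.differentiable (by simp)) (x, y)).hasFDerivAt.comp_hasDerivAt y
    ((hasDerivAt_const y x).prodMk (hasDerivAt_id y))

theorem Dx_smooth (f : ℝ × ℝ → ℝ) (hf : ContDiff ℝ (⊤ : ℕ∞) f) : ContDiff ℝ (⊤ : ℕ∞) (Dx f) :=
  (ContinuousLinearMap.apply ℝ ℝ ((1 : ℝ), (0 : ℝ))).contDiff.comp (hf.fderiv_right (by simp))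

theorem Dy_smooth (f : ℝ × ℝ → ℝ) (hf : ContDiff ℝ (⊤ : ℕ∞) f) : ContDiff ℝ (⊤ : ℕ∞) (Dy f) :=
  (ContinuousLinearMap.apply ℝ ℝ ((0 : ℝ), (1 : ℝ))).contDiff.comp (hf.fderiv_right (by simp))

theorem Dswap (f : ℝ × ℝ → ℝ) (hf : ContDiff ℝ (⊤ : ℕ∞) f) (p : ℝ × ℝ) :
    Dy (Dx f) p = Dx (Dy f) p := by
  have hdf : DifferentiableAt ℝ (fderiv ℝ f) p :=
    ((hf.fderiv_right (m := 1) (by rw [one_add_one_eq_two, ← WithTop.coe_ofNat]; exact WithTop.coe_le_coe.2 le_top)).differentiable (by simp)) p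
  have key : ∀ w : ℝ × ℝ, fderiv ℝ (fun q => fderiv ℝ f q w) p
      = (ContinuousLinearMap.apply ℝ ℝ w).comp (fderiv ℝ (fderiv ℝ f) p) := fun w =>
    ((ContinuousLinearMap.apply ℝ ℝ w).hasFDerivAt.comp p hdf.hasFDerivAt).fderiv
  show fderiv ℝ (fun q => fderiv ℝ f q (1, 0)) p (0, 1)
      = fderiv ℝ (fun q => fderiv ℝ f q (0, 1)) p (1, 0)
  rw [key, key]
  have hsymm := (hf.contDiffAt (x := p)).isSymmSndFDerivAt (by simp only [minSmoothness_of_isRCLikeNormedField]; rw [← WithTop.coe_ofNat]; exact WithTop.coe_le_coe.2 le_top)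
  simpa using hsymm (0, 1) (1, 0)

theorem px_eq {ψ : ℝ → ℝ → ℝ} (hΨ : ContDiff ℝ (⊤ : ℕ∞) (fun p : ℝ × ℝ => ψ p.1 p.2)) (x y : ℝ) :
    px ψ x y = Dx (fun p : ℝ × ℝ => ψ p.1 p.2) (x, y) :=
  (sliceX _ hΨ x y).deriv

theorem py_eq {ψ : ℝ → ℝ → ℝ} (hΨ : ContDiff ℝ (⊤ : ℕ∞) (fun p : ℝ × ℝ => ψ p.1 p.2)) (x y : ℝ) :
    py ψ x y = Dy (fun p : ℝ × ℝ => ψ p.1 p.2) (x, y) :=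
  (sliceY _ hΨ x y).deriv

theorem pxx_eq {ψ : ℝ → ℝ → ℝ} (hΨ : ContDiff ℝ (⊤ : ℕ∞) (fun p : ℝ × ℝ => ψ p.1 p.2)) (x y : ℝ) :
    pxx ψ x y = Dx (Dx (fun p : ℝ × ℝ => ψ p.1 p.2)) (x, y) := by
  have h : (fun t => px ψ t y) = (fun t => Dx (fun p : ℝ × ℝ => ψ p.1 p.2) (t, y)) :=
    funext fun t => px_eq hΨ t y
  rw [pxx, h]
  exact (sliceX _ (Dx_smooth _ hΨ) x y).deriv

theorem pyy_eq {ψ : ℝ → ℝ → ℝ} (hΨ : ContDiff ℝ (⊤ : ℕ∞) (fun p : ℝ × ℝ => ψ p.1 p.2)) (x y : ℝ) :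
    pyy ψ x y = Dy (Dy (fun p : ℝ × ℝ => ψ p.1 p.2)) (x, y) := by
  have h : (fun t => py ψ x t) = (fun t => Dy (fun p : ℝ × ℝ => ψ p.1 p.2) (x, t)) :=
    funext fun t => py_eq hΨ x t
  rw [pyy, h]
  exact (sliceY _ (Dy_smooth _ hΨ) x y).deriv

theorem deriv_le_zero_left {f : ℝ → ℝ} {a b d : ℝ} (hab : a < b)
    (hd : HasDerivAt f d b) (h : ∀ x ∈ Ico a b, f b ≤ f x) : d ≤ 0 := by
  have hset : (Iio b) \ {b} = Iio b := diff_singleton_eq_self (by simp)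
  have hs : Tendsto (slope f b) (𝓝[Iio b] b) (𝓝 d) := by
    have := hasDerivWithinAt_iff_tendsto_slope.1 (hd.hasDerivWithinAt (s := Iio b))
    rwa [hset] at this
  refine le_of_tendsto hs ?_
  have hmem : Ioo a b ∈ 𝓝[Iio b] b :=
    mem_nhdsWithin.2 ⟨Ioi a, isOpen_Ioi, hab, by rintro x ⟨hx1, hx2⟩; exact ⟨hx1, hx2⟩⟩
  filter_upwards [hmem] with x hx
  have h1 : 0 ≤ f x - f b := sub_nonneg.2 (h x ⟨hx.1.le, hx.2⟩)
  have h2 : x - b ≤ 0 := by linarith [hx.2]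
  rw [slope_def_field, div_eq_mul_inv]
  exact mul_nonpos_iff.2 (Or.inl ⟨h1, inv_nonpos.2 h2⟩)

theorem deriv_ge_zero_right {f : ℝ → ℝ} {b c d : ℝ} (hbc : b < c)
    (hd : HasDerivAt f d b) (h : ∀ x ∈ Ioc b c, f b ≤ f x) : 0 ≤ d := by
  have hset : (Ioi b) \ {b} = Ioi b := diff_singleton_eq_self (by simp)
  have hs : Tendsto (slope f b) (𝓝[Ioi b] b) (𝓝 d) := by
    have := hasDerivWithinAt_iff_tendsto_slope.1 (hd.hasDerivWithinAt (s := Ioi b))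
    rwa [hset] at this
  refine ge_of_tendsto hs ?_
  have hmem : Ioo b c ∈ 𝓝[Ioi b] b :=
    mem_nhdsWithin.2 ⟨Iio c, isOpen_Iio, hbc, by rintro x ⟨hx1, hx2⟩; exact ⟨hx2, hx1⟩⟩
  filter_upwards [hmem] with x hx
  have h1 : 0 ≤ f x - f b := sub_nonneg.2 (h x ⟨hx.1, hx.2.le⟩)
  have h2 : 0 ≤ x - b := by linarith [hx.1]
  rw [slope_def_field]
  positivity

theorem deriv_zero_of_even {f : ℝ → ℝ} {d : ℝ} (hf : ∀ x, f (-x) = f x)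
    (hd : HasDerivAt f d 0) : d = 0 := by
  have hneg : HasDerivAt (fun x : ℝ => -x) (-1) 0 := (hasDerivAt_id (0:ℝ)).neg
  have hd' : HasDerivAt f d (-(0:ℝ)) := by rwa [neg_zero]
  have h2 : HasDerivAt (fun x => f (-x)) (d * (-1)) 0 := hd'.comp 0 hneg
  have h3 : (fun x => f (-x)) = f := funext hf
  rw [h3] at h2
  have := hd.unique h2
  linarith

theorem secondDeriv_nonneg_of_isLocalMin {f : ℝ → ℝ} {a : ℝ}
    (hf : ContDiff ℝ (⊤ : ℕ∞) f) (h : IsLocalMin f a) : 0 ≤ deriv (deriv f) a := by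
  by_contra hneg
  push_neg at hneg
  have hdf : ContDiff ℝ (⊤ : ℕ∞) (deriv f) := (contDiff_infty_iff_deriv.mp hf).2
  have hd2c : Continuous (deriv (deriv f)) := (contDiff_infty_iff_deriv.mp hdf).2.continuous
  obtain ⟨δ, hδ, hball⟩ : ∃ δ > 0, ∀ x ∈ Icc a (a + δ), deriv (deriv f) x < 0 := by
    have hev : ∀ᶠ x in 𝓝 a, deriv (deriv f) x < 0 :=
      (hd2c.continuousAt (x := a)).eventually_lt_const hneg
    obtain ⟨ε, hε, hb⟩ := Metric.eventually_nhds_iff_ball.1 hev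
    refine ⟨ε/2, by linarith, fun x hx => hb x ?_⟩
    rw [Metric.mem_ball, Real.dist_eq, abs_lt]
    obtain ⟨h1, h2⟩ := hx
    constructor <;> linarith
  have hdf0 : deriv f a = 0 := h.deriv_eq_zero
  have hanti : StrictAntiOn (deriv f) (Icc a (a + δ)) := by
    refine strictAntiOn_of_deriv_neg (convex_Icc _ _) (hdf.continuous.continuousOn)
      (fun x hx => ?_)
    rw [interior_Icc] at hx
    exact hball x ⟨hx.1.le, hx.2.le⟩
  have hderiv_neg : ∀ x ∈ Ioo a (a + δ), deriv f x < 0 := by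
    intro x hx
    have := hanti ⟨le_refl a, by linarith⟩ ⟨hx.1.le, hx.2.le⟩ hx.1
    rwa [hdf0] at this
  have hfanti : StrictAntiOn f (Icc a (a + δ)) := by
    refine strictAntiOn_of_deriv_neg (convex_Icc _ _) (hf.continuous.continuousOn)
      (fun x hx => ?_)
    rw [interior_Icc] at hx
    exact hderiv_neg x hx
  have hmem : Ioo a (a + δ) ∈ 𝓝[>] a :=
    Ioo_mem_nhdsGT_of_mem ⟨le_refl a, by linarith⟩
  have hev2 : ∀ᶠ x in 𝓝[>] a, f a ≤ f x := (h.filter_mono nhdsWithin_le_nhds)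
  obtain ⟨x, hx1, hx2⟩ := (hev2.and hmem).exists
  have : f x < f a := hfanti ⟨le_refl a, by linarith⟩ ⟨hx2.1.le, hx2.2.le⟩ hx2.1
  linarith

/-- Weak minimum principle tailored to the Stokes-wave half-period cell. -/
theorem minPrinciple (v : ℝ × ℝ → ℝ) (η : ℝ → ℝ) (Λ : ℝ) (hΛ : 0 < Λ)
    (hv : ContDiff ℝ (⊤ : ℕ∞) v) (hη : Continuous η) (hηpos : ∀ x, 0 < η x)
    (hηmax : ∀ x ∈ Icc 0 Λ, η x ≤ η 0)
    (hlap : ∀ p : ℝ × ℝ, 0 < p.2 → p.2 < η p.1 → Dx (Dx v) p + Dy (Dy v) p = 0)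
    (hbot : ∀ x, v (x, 0) = 0) (hleft : ∀ y, v (0, y) = 0) (hright : ∀ y, v (Λ, y) = 0)
    (hsurf : ∀ x ∈ Icc 0 Λ, 0 ≤ v (x, η x)) :
    ∀ p : ℝ × ℝ, p.1 ∈ Icc 0 Λ → p.2 ∈ Icc 0 (η p.1) → 0 ≤ v p := by
  set E : Set (ℝ × ℝ) := {p | p.1 ∈ Icc 0 Λ ∧ p.2 ∈ Icc 0 (η p.1)} with hE
  have hEcompact : IsCompact E := by
    have h1 : E = (Icc (0:ℝ) Λ ×ˢ Icc (0:ℝ) (η 0)) ∩ {p : ℝ × ℝ | p.2 ≤ η p.1} := by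
      ext p
      simp only [hE, mem_setOf_eq, mem_inter_iff, mem_prod, mem_Icc]
      constructor
      · rintro ⟨⟨h1, h2⟩, h3, h4⟩
        exact ⟨⟨⟨h1, h2⟩, h3, h4.trans (hηmax p.1 ⟨h1, h2⟩)⟩, h4⟩
      · rintro ⟨⟨⟨h1, h2⟩, h3, _⟩, h5⟩
        exact ⟨⟨h1, h2⟩, h3, h5⟩
    rw [h1]
    exact (isCompact_Icc.prod isCompact_Icc).inter_right
      (isClosed_le continuous_snd (hη.comp continuous_fst))
  have hEne : E.Nonempty := ⟨(0, 0), ⟨le_refl 0, hΛ.le⟩, le_refl 0, (hηpos 0).le⟩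
  have hbdd : ∀ p ∈ E, ¬(0 < p.1 ∧ p.1 < Λ ∧ 0 < p.2 ∧ p.2 < η p.1) → 0 ≤ v p := by
    rintro ⟨x, y⟩ ⟨⟨hx0, hxΛ⟩, hy0, hyη⟩ hnot
    push_neg at hnot
    dsimp only at hx0 hxΛ hy0 hyη hnot ⊢
    rcases eq_or_lt_of_le hx0 with h | h
    · rw [← h, hleft]
    rcases eq_or_lt_of_le hxΛ with h2 | h2
    · rw [h2]; exact (hright y).ge
    rcases eq_or_lt_of_le hy0 with h3 | h3
    · rw [← h3, hbot]
    rcases eq_or_lt_of_le hyη with h4 | h4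
    · rw [h4]; exact hsurf x ⟨hx0, hxΛ⟩
    exact absurd h4 (by simpa using hnot h h2 h3)
  have key : ∀ ε > 0, ∀ p ∈ E, -(ε * (η 0)^2) ≤ v p := by
    intro ε hε p hp
    set w : ℝ × ℝ → ℝ := fun q => v q - ε * q.2 ^ 2 with hw
    have hwsm : ContDiff ℝ (⊤ : ℕ∞) w :=
      hv.sub ((contDiff_const.mul (contDiff_snd.pow 2)))
    obtain ⟨q, hqE, hqmin⟩ := hEcompact.exists_isMinOn hEne (hwsm.continuous.continuousOn)
    have hqbd : ¬(0 < q.1 ∧ q.1 < Λ ∧ 0 < q.2 ∧ q.2 < η q.1) := by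
      rintro ⟨hq1, hq2, hq3, hq4⟩
      have hVopen : IsOpen {p : ℝ × ℝ | 0 < p.1 ∧ p.1 < Λ ∧ 0 < p.2 ∧ p.2 < η p.1} := by
        apply IsOpen.inter (isOpen_lt continuous_const continuous_fst)
        apply IsOpen.inter (isOpen_lt continuous_fst continuous_const)
        exact IsOpen.inter (isOpen_lt continuous_const continuous_snd)
          (isOpen_lt continuous_snd (hη.comp continuous_fst))
      have hVsub : {p : ℝ × ℝ | 0 < p.1 ∧ p.1 < Λ ∧ 0 < p.2 ∧ p.2 < η p.1} ⊆ E := by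
        rintro ⟨x, y⟩ ⟨a1, a2, a3, a4⟩
        exact ⟨⟨a1.le, a2.le⟩, a3.le, a4.le⟩
      have hloc : IsLocalMin w q := hqmin.isLocalMin
        (Filter.mem_of_superset (hVopen.mem_nhds ⟨hq1, hq2, hq3, hq4⟩) hVsub)
      have hcx : ContinuousAt (fun t : ℝ => (t, q.2)) q.1 :=
        (continuous_id.prodMk continuous_const).continuousAt
      have hcy : ContinuousAt (fun t : ℝ => (q.1, t)) q.2 :=
        (continuous_const.prodMk continuous_id).continuousAt
      have hlocq : IsLocalMin w ((fun t : ℝ => (t, q.2)) q.1) := by simpa using hloc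
      have hlocx : IsLocalMin (fun t => w (t, q.2)) q.1 :=
        IsLocalMin.comp_continuous (g := fun t : ℝ => (t, q.2)) hlocq hcx
      have hlocq' : IsLocalMin w ((fun t : ℝ => (q.1, t)) q.2) := by simpa using hloc
      have hlocy : IsLocalMin (fun t => w (q.1, t)) q.2 :=
        IsLocalMin.comp_continuous (g := fun t : ℝ => (q.1, t)) hlocq' hcy
      have hsx : ContDiff ℝ (⊤ : ℕ∞) (fun t => w (t, q.2)) :=
        (hwsm.comp (contDiff_id.prodMk contDiff_const)).of_le (by simp)
      have hsy : ContDiff ℝ (⊤ : ℕ∞) (fun t => w (q.1, t)) :=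
        (hwsm.comp (contDiff_const.prodMk contDiff_id)).of_le (by simp)
      have Hx := secondDeriv_nonneg_of_isLocalMin hsx hlocx
      have Hy := secondDeriv_nonneg_of_isLocalMin hsy hlocy
      have ex1 : deriv (fun t => w (t, q.2)) = fun t => Dx v (t, q.2) := by
        funext t
        have h1 : HasDerivAt (fun t => w (t, q.2)) (Dx v (t, q.2)) t := by
          have := (sliceX v hv t q.2).sub_const (ε * q.2 ^ 2)
          exact this
        exact h1.deriv
      have ex2 : deriv (deriv (fun t => w (t, q.2))) q.1 = Dx (Dx v) q := by
        rw [ex1]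
        exact (sliceX (Dx v) (Dx_smooth v hv) q.1 q.2).deriv
      have ey1 : deriv (fun t => w (q.1, t)) = fun t => Dy v (q.1, t) - 2 * ε * t := by
        funext t
        have h1 : HasDerivAt (fun t => w (q.1, t)) (Dy v (q.1, t) - 2 * ε * t) t := by
          have h2 : HasDerivAt (fun t : ℝ => ε * t ^ 2) (2 * ε * t) t := by
            have := (hasDerivAt_pow 2 t).const_mul ε
            exact this.congr_deriv (by rw [show (2:ℕ) - 1 = 1 from rfl]; push_cast; ring)
          exact (sliceY v hv q.1 t).sub h2
        exact h1.deriv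
      have ey2 : deriv (deriv (fun t => w (q.1, t))) q.2 = Dy (Dy v) q - 2 * ε := by
        rw [ey1]
        have h2 : HasDerivAt (fun t : ℝ => 2 * ε * t) (2 * ε) q.2 := by
          have := (hasDerivAt_id q.2).const_mul (2 * ε)
          exact this.congr_deriv (by ring)
        have h3 : HasDerivAt (fun t => Dy v (q.1, t) - 2 * ε * t) (Dy (Dy v) q - 2 * ε) q.2 := by
          have h4 := (sliceY (Dy v) (Dy_smooth v hv) q.1 q.2).sub h2
          exact h4
        exact h3.deriv
      rw [ex2] at Hx
      rw [ey2] at Hy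
      have hzero := hlap q hq3 hq4
      linarith
    have hq0 : -(ε * (η 0)^2) ≤ w q := by
      have := hbdd q hqE hqbd
      have hq2a : (0:ℝ) ≤ q.2 := hqE.2.1
      have hq2b : q.2 ≤ η 0 := hqE.2.2.trans (hηmax q.1 hqE.1)
      have : -(ε * (η 0)^2) ≤ -(ε * q.2^2) := by
        have := mul_le_mul_of_nonneg_left (pow_le_pow_left₀ hq2a hq2b 2) hε.le
        linarith
      calc -(ε * (η 0)^2) ≤ -(ε * q.2^2) := this
        _ ≤ v q - ε * q.2^2 := by linarith [hbdd q hqE hqbd]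
    calc -(ε * (η 0)^2) ≤ w q := hq0
      _ ≤ w p := hqmin hp
      _ ≤ v p := by
          have : (0:ℝ) ≤ ε * p.2 ^ 2 := mul_nonneg hε.le (sq_nonneg p.2)
          show v p - ε * p.2 ^ 2 ≤ v p
          linarith
  intro p hp1 hp2
  by_contra hvp
  push_neg at hvp
  have hB : (0:ℝ) ≤ (η 0)^2 := sq_nonneg _
  set ε := -v p / ((η 0)^2 + 1) with hεdef
  have hεpos : 0 < ε := div_pos (by linarith) (by linarith)
  have := key ε hεpos p ⟨hp1, hp2⟩
  have h1 : ε * (η 0)^2 < -v p := by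
    rw [hεdef, div_mul_eq_mul_div, div_lt_iff₀ (by linarith)]
    nlinarith
  linarith

/-- The horizontal velocity `ψ_x` is harmonic inside the fluid domain. -/
theorem harmonic_px {ψ : ℝ → ℝ → ℝ} {η : ℝ → ℝ} {γ : ℝ}
    (hΨ : ContDiff ℝ (⊤ : ℕ∞) (fun p : ℝ × ℝ => ψ p.1 p.2)) (hη : Continuous η)
    (hpde : ∀ x y : ℝ, 0 < y → y < η x → pxx ψ x y + pyy ψ x y = γ) :
    ∀ p : ℝ × ℝ, 0 < p.2 → p.2 < η p.1 →
      Dx (Dx (Dx (fun p : ℝ × ℝ => ψ p.1 p.2))) p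
        + Dy (Dy (Dx (fun p : ℝ × ℝ => ψ p.1 p.2))) p = 0 := by
  intro p hp1 hp2
  set Ψ : ℝ × ℝ → ℝ := fun p : ℝ × ℝ => ψ p.1 p.2 with hΨdef
  set A := Dx Ψ with hA
  set B := Dy Ψ with hB
  have hAs : ContDiff ℝ (⊤ : ℕ∞) A := Dx_smooth Ψ hΨ
  have hBs : ContDiff ℝ (⊤ : ℕ∞) B := Dy_smooth Ψ hΨ
  have hU : IsOpen {q : ℝ × ℝ | 0 < q.2 ∧ q.2 < η q.1} :=
    (isOpen_lt continuous_const continuous_snd).inter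
      (isOpen_lt continuous_snd (hη.comp continuous_fst))
  set Φ : ℝ × ℝ → ℝ := fun q => Dx A q + Dy B q with hΦ
  have hΦγ : ∀ q ∈ {q : ℝ × ℝ | 0 < q.2 ∧ q.2 < η q.1}, Φ q = γ := by
    rintro ⟨x, y⟩ ⟨h1, h2⟩
    have := hpde x y h1 h2
    rwa [pxx_eq hΨ, pyy_eq hΨ] at this
  have hev : Φ =ᶠ[𝓝 p] fun _ => γ :=
    Filter.eventuallyEq_of_mem (hU.mem_nhds ⟨hp1, hp2⟩) hΦγ
  have hfd : fderiv ℝ Φ p = fderiv ℝ (fun _ : ℝ × ℝ => γ) p := hev.fderiv_eq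
  have hfd0 : fderiv ℝ Φ p = 0 := by rw [hfd, fderiv_fun_const]; rfl
  have hDxΦ : Dx Φ p = 0 := by rw [Dx, hfd0]; rfl
  have hsplit : Dx Φ p = Dx (Dx A) p + Dx (Dy B) p := by
    rw [Dx, Dx, Dx, hΦ]
    rw [fderiv_fun_add (((Dx_smooth A hAs).differentiable (by simp)) p)
      (((Dy_smooth B hBs).differentiable (by simp)) p)]
    rfl
  have hswap1 : Dy (Dy A) p = Dx (Dy B) p := by
    have h1 : Dy A = Dx B := funext fun q => Dswap Ψ hΨ q
    rw [h1]
    exact Dswap B hBs p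
  rw [hswap1]
  rw [← hsplit, hDxΦ]

end Helpers

section MainEstimate

open Filter Topology

/-- Pure algebra step of the estimate. -/
theorem algebra_step {γ t S d0 κ r : ℝ} (hγ : 0 < γ) (ht : 0 < t) (hd0pos : 0 < d0)
    (hγd0 : γ * d0 ^ 2 = 2) (hF1 : κ + γ * t ≤ S) (hF2 : 1 ≤ S * t - γ * t ^ 2 / 2)
    (hS2 : S ^ 2 = 2 * r - 2 * t) (hrup : r ≤ γ + d0) : κ ≤ 4 / γ := by
  obtain ⟨k, hk⟩ : ∃ k, k = S - γ * t := ⟨_, rfl⟩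
  have hκk : κ ≤ k := by rw [hk]; linarith
  have hF2' : 1 ≤ k * t + γ * t ^ 2 / 2 := by
    have he : k * t + γ * t ^ 2 / 2 = S * t - γ * t ^ 2 / 2 := by rw [hk]; ring
    linarith
  have h3 : k ^ 2 + 2 * (k * (γ * t)) + γ ^ 2 * t ^ 2 ≤ 2 * γ + 2 * d0 - 2 * t := by
    have he : S ^ 2 = k ^ 2 + 2 * (k * (γ * t)) + γ ^ 2 * t ^ 2 := by rw [hk]; ring
    linarith
  clear hk hF1 hF2 hS2
  have hkbound : k ≤ 4 / γ := by
    rcases le_or_gt k 0 with hk0 | hk0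
    · have : (0:ℝ) ≤ 4 / γ := by positivity
      linarith
    · have h4 : 2 * γ * (1 - k * t) ≤ 2 * γ * (γ * t ^ 2 / 2) :=
        mul_le_mul_of_nonneg_left (by linarith) (by linarith)
      have h5 : k ^ 2 + 2 * t ≤ 2 * d0 := by nlinarith [h3, h4]
      have hed : k ^ 2 / 2 ≤ d0 - t := by linarith
      have he0 : (0:ℝ) < d0 - t := lt_of_lt_of_le (by positivity) hed
      have hc : 1 - γ * t ^ 2 / 2 = γ * d0 * (d0 - t) - γ * (d0 - t) ^ 2 / 2 := by
        linear_combination (-1/2 : ℝ) * hγd0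
      have hd' : γ * (d0 - t) * d0 / 2 ≤ γ * d0 * (d0 - t) - γ * (d0 - t) ^ 2 / 2 := by
        nlinarith [mul_nonneg (mul_nonneg hγ.le he0.le) ht.le]
      have hkt : γ * (d0 - t) * d0 / 2 ≤ k * t := by linarith
      have hktd0 : k * t ≤ k * d0 := mul_le_mul_of_nonneg_left (by linarith) hk0.le
      have hk2 : γ * (d0 - t) / 2 ≤ k := by
        have h6 : γ * (d0 - t) * d0 / 2 ≤ k * d0 := le_trans hkt hktd0
        nlinarith [h6, hd0pos]
      have hk3 : γ * k ^ 2 / 4 ≤ k := by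
        have h7 := mul_le_mul_of_nonneg_left hed (by positivity : (0:ℝ) ≤ γ / 2)
        nlinarith [h7, hk2]
      have hγk : γ * k ≤ 4 := by nlinarith [hk3, hk0]
      rw [le_div_iff₀ hγ]
      nlinarith [hγk]
  linarith

/-- The key quantitative estimate: for any unidirectional Stokes wave with
`r < R(0)`, the bottom velocity is at most `4/γ`. -/
theorem key_estimate {γ : ℝ} (hγ : 0 < γ) {ψ : ℝ → ℝ → ℝ} {η : ℝ → ℝ} {r Λ : ℝ}
    (hSW : StokesWave γ ψ η r Λ) (hUni : Unidirectional ψ η)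
    (hupp : r < bernR γ 0) : ∀ x : ℝ, py ψ x 0 ≤ 4 / γ := by
  obtain ⟨sol, hΛ, hper, heven, hpper, hpeven, hanti⟩ := hSW
  have hΨ := sol.psi_smooth
  have hηs := sol.eta_smooth
  have hηc : Continuous η := hηs.continuous
  have hηd : Differentiable ℝ η := hηs.differentiable (by simp)
  set Ψ : ℝ × ℝ → ℝ := fun p : ℝ × ℝ => ψ p.1 p.2 with hΨdef
  set A : ℝ × ℝ → ℝ := Dx Ψ with hAdef
  set B : ℝ × ℝ → ℝ := Dy Ψ with hBdef
  have hAs : ContDiff ℝ (⊤ : ℕ∞) A := Dx_smooth Ψ hΨ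
  have hBs : ContDiff ℝ (⊤ : ℕ∞) B := Dy_smooth Ψ hΨ
  -- symmetry of ψ about Λ
  have hsymΛ : ∀ s y : ℝ, ψ (Λ + s) y = ψ (Λ - s) y := by
    intro s y
    have e1 : Λ + s = (s - Λ) + 2 * Λ := by ring
    rw [e1, hpper]
    have e2 : s - Λ = -(Λ - s) := by ring
    rw [e2, hpeven]
  have hηsymΛ : ∀ s : ℝ, η (Λ + s) = η (Λ - s) := by
    intro s
    have e1 : Λ + s = (s - Λ) + 2 * Λ := by ring
    rw [e1, hper]
    have e2 : s - Λ = -(Λ - s) := by ring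
    rw [e2, heven]
  -- A vanishes on bottom, left and right sides
  have hAbot : ∀ x : ℝ, A (x, 0) = 0 := by
    intro x
    have h1 : px ψ x 0 = A (x, 0) := px_eq hΨ x 0
    rw [← h1, px]
    have h2 : (fun t => ψ t 0) = fun _ : ℝ => (0 : ℝ) := funext sol.bottom_val
    rw [h2, deriv_const]
  have hAleft : ∀ y : ℝ, A (0, y) = 0 := by
    intro y
    have hd : HasDerivAt (fun t => Ψ (t, y)) (A (0, y)) 0 := sliceX Ψ hΨ 0 y
    exact deriv_zero_of_even (fun x => hpeven x y) hd
  have hAright : ∀ y : ℝ, A (Λ, y) = 0 := by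
    intro y
    have hi : HasDerivAt (fun s : ℝ => Λ + s) 1 0 := by
      simpa using (hasDerivAt_id (0:ℝ)).const_add Λ
    have ho : HasDerivAt (fun t => Ψ (t, y)) (A (Λ + 0, y)) (Λ + 0) := sliceX Ψ hΨ (Λ + 0) y
    have hg : HasDerivAt (fun s => Ψ (Λ + s, y)) (A (Λ + 0, y) * 1) 0 := ho.comp 0 hi
    have heg : ∀ s, (fun s => Ψ (Λ + s, y)) (-s) = (fun s => Ψ (Λ + s, y)) s := by
      intro s
      show ψ (Λ + -s) y = ψ (Λ + s) y
      have e : Λ + -s = Λ - s := by ring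
      rw [e, hsymΛ s y]
    have := deriv_zero_of_even heg hg
    simpa using this
  -- derivative of η is nonpositive on [0, Λ]
  have hηd0 : deriv η 0 = 0 :=
    deriv_zero_of_even heven (hηd 0).hasDerivAt
  have hηdΛ : deriv η Λ = 0 := by
    have hi : HasDerivAt (fun s : ℝ => Λ + s) 1 0 := by
      simpa using (hasDerivAt_id (0:ℝ)).const_add Λ
    have ho : HasDerivAt η (deriv η (Λ + 0)) (Λ + 0) := (hηd (Λ + 0)).hasDerivAt
    have hg : HasDerivAt (fun s => η (Λ + s)) (deriv η (Λ + 0) * 1) 0 := ho.comp 0 hi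
    have heg : ∀ s, (fun s => η (Λ + s)) (-s) = (fun s => η (Λ + s)) s := by
      intro s
      show η (Λ + -s) = η (Λ + s)
      have e : Λ + -s = Λ - s := by ring
      rw [e, hηsymΛ s]
    have := deriv_zero_of_even heg hg
    simpa using this
  have hηd_nonpos : ∀ x ∈ Icc 0 Λ, deriv η x ≤ 0 := by
    rintro x ⟨hx0, hxΛ⟩
    rcases eq_or_lt_of_le hx0 with h | h
    · rw [← h, hηd0]
    rcases eq_or_lt_of_le hxΛ with h2 | h2
    · rw [h2, hηdΛ]
    refine deriv_le_zero_left h (hηd x).hasDerivAt ?_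
    rintro x' ⟨hx'0, hx'x⟩
    exact (hanti ⟨hx'0, (hx'x.le.trans hxΛ)⟩ ⟨hx0, hxΛ⟩ hx'x).le
  have hηmin : ∀ x ∈ Icc 0 Λ, η Λ ≤ η x := by
    rintro x ⟨hx0, hxΛ⟩
    rcases eq_or_lt_of_le hxΛ with h | h
    · rw [h]
    · exact (hanti ⟨hx0, hxΛ⟩ ⟨le_refl 0 |>.trans hΛ.le, le_refl Λ⟩ h).le
  have hηmax : ∀ x ∈ Icc 0 Λ, η x ≤ η 0 := by
    rintro x ⟨hx0, hxΛ⟩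
    rcases eq_or_lt_of_le hx0 with h | h
    · rw [← h]
    · exact (hanti ⟨le_refl 0, hΛ.le⟩ ⟨hx0, hxΛ⟩ h).le
  -- vertical velocity is nonnegative at surface
  have hBcont : Continuous B := hBs.continuous
  have hBsurf : ∀ x : ℝ, 0 ≤ B (x, η x) := by
    intro x
    have hf : Continuous (fun y => B (x, y)) :=
      hBcont.comp (continuous_const.prodMk continuous_id)
    have htd : Tendsto (fun y => B (x, y)) (𝓝[<] (η x)) (𝓝 (B (x, η x))) :=
      (hf.tendsto (η x)).mono_left nhdsWithin_le_nhds
    refine ge_of_tendsto htd ?_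
    filter_upwards [Ioo_mem_nhdsLT_of_mem (⟨sol.eta_pos x, le_refl (η x)⟩ : η x ∈ Ioc 0 (η x))]
      with y hy
    have := hUni x y hy.1 hy.2
    rw [py_eq hΨ x y] at this
    exact this.le
  -- surface boundary identity
  have hAsurf : ∀ x : ℝ, A (x, η x) = -(deriv η x) * B (x, η x) := by
    intro x
    have hc : HasDerivAt (fun x => (x, η x) : ℝ → ℝ × ℝ) (1, deriv η x) x :=
      (hasDerivAt_id x).prodMk (hηd x).hasDerivAt
    have hcomp : HasDerivAt (fun x => Ψ (x, η x)) (fderiv ℝ Ψ (x, η x) (1, deriv η x)) x :=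
      by have h := ((hΨ.differentiable (by simp : ((⊤ : ℕ∞) : WithTop ℕ∞) ≠ 0)) (x, η x)).hasFDerivAt.comp_hasDerivAt x hc; exact h
    have hval : fderiv ℝ Ψ (x, η x) (1, deriv η x)
        = A (x, η x) + deriv η x * B (x, η x) := by
      have hsplit : ((1 : ℝ), deriv η x) = ((1 : ℝ), (0 : ℝ)) + deriv η x • ((0 : ℝ), (1 : ℝ)) := by
        simp [Prod.ext_iff]
      rw [hsplit, map_add, map_smul]
      simp [hAdef, hBdef, Dx, Dy, smul_eq_mul]
    have hconst : (fun x => Ψ (x, η x)) = fun _ : ℝ => (1 : ℝ) :=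
      funext fun x => sol.surface_val x
    have hzero : HasDerivAt (fun x => Ψ (x, η x)) 0 x := by
      rw [hconst]; exact hasDerivAt_const x 1
    have := (hcomp.unique hzero)
    rw [hval] at this
    linarith
  -- minimum principle: A ≥ 0 on the half-period cell
  have hA_nonneg : ∀ p : ℝ × ℝ, p.1 ∈ Icc 0 Λ → p.2 ∈ Icc 0 (η p.1) → 0 ≤ A p := by
    refine minPrinciple A η Λ hΛ hAs hηc sol.eta_pos hηmax ?_ hAbot hAleft hAright ?_
    · exact harmonic_px hΨ hηc sol.laplace
    · intro x hx
      rw [hAsurf x]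
      exact mul_nonneg (neg_nonneg.2 (hηd_nonpos x hx)) (hBsurf x)
  -- bottom velocity is monotone on [0, Λ]
  have hweq : (fun x => py ψ x 0) = fun x => B (x, 0) := funext fun x => py_eq hΨ x 0
  have hwmono : MonotoneOn (fun x => py ψ x 0) (Icc 0 Λ) := by
    rw [hweq]
    refine monotoneOn_of_deriv_nonneg (convex_Icc _ _)
      ((hBcont.comp (continuous_id.prodMk continuous_const)).continuousOn) ?_ ?_
    · intro x hx
      exact (sliceX B hBs x 0).differentiableAt.differentiableWithinAt
    · intro x hx
      rw [interior_Icc] at hx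
      rw [(sliceX B hBs x 0).deriv]
      have hswap : Dx B (x, 0) = Dy A (x, 0) := (Dswap Ψ hΨ (x, 0)).symm
      rw [hswap]
      refine deriv_ge_zero_right (sol.eta_pos x) (sliceY A hAs x 0) ?_
      rintro y ⟨hy0, hyη⟩
      rw [hAbot x]
      exact hA_nonneg (x, y) ⟨hx.1.le, hx.2.le⟩ ⟨hy0.le, hyη⟩
  -- fold an arbitrary x into [0, Λ]
  have hweven : ∀ x, py ψ (-x) 0 = py ψ x 0 := by
    intro x
    show deriv (fun t => ψ (-x) t) 0 = deriv (fun t => ψ x t) 0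
    rw [funext fun t => hpeven x t]
  have hwper : Function.Periodic (fun x => py ψ x 0) (2 * Λ) := by
    intro x
    show deriv (fun t => ψ (x + 2 * Λ) t) 0 = deriv (fun t => ψ x t) 0
    rw [funext fun t => hpper x t]
  have hfold : ∀ x : ℝ, py ψ x 0 ≤ py ψ Λ 0 := by
    intro x
    have h2Λ : (0 : ℝ) < 2 * Λ := by linarith
    set z := toIcoMod h2Λ (-Λ) x with hzdef
    have hz : z ∈ Ico (-Λ) (-Λ + 2 * Λ) := toIcoMod_mem_Ico h2Λ (-Λ) x
    have hzval : z = x - toIcoDiv h2Λ (-Λ) x • (2 * Λ) := by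
      have := self_sub_toIcoMod h2Λ (-Λ) x
      linarith [this]
    have hwz : py ψ z 0 = py ψ x 0 := by
      rw [hzval]
      exact hwper.sub_zsmul_eq (toIcoDiv h2Λ (-Λ) x)
    rw [← hwz]
    have hzΛ : z < Λ := by
      have := hz.2
      linarith
    rcases le_or_gt 0 z with hz0 | hz0
    · exact hwmono ⟨hz0, hzΛ.le⟩ ⟨hΛ.le, le_refl Λ⟩ hzΛ.le
    · have hneg : py ψ z 0 = py ψ (-z) 0 := by
        rw [← hweven (-z), neg_neg]
      rw [hneg]
      have h1 : -z ≤ Λ := by linarith [hz.1]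
      exact hwmono ⟨by linarith, h1⟩ ⟨hΛ.le, le_refl Λ⟩ h1
  -- trough-line analysis
  set t := η Λ with htdef
  have ht : 0 < t := sol.eta_pos Λ
  set S := py ψ Λ t with hSdef
  set κ := py ψ Λ 0 with hκdef
  have hpxxΛ : ∀ y ∈ Ioo (0:ℝ) t, pxx ψ Λ y ≤ 0 := by
    rintro y ⟨hy0, hyt⟩
    have hd : HasDerivAt (fun x => A (x, y)) (Dx A (Λ, y)) Λ := sliceX A hAs Λ y
    have hle : Dx A (Λ, y) ≤ 0 := by
      refine deriv_le_zero_left hΛ hd ?_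
      rintro x ⟨hx0, hxΛ⟩
      rw [hAright y]
      exact hA_nonneg (x, y) ⟨hx0, hxΛ.le⟩ ⟨hy0.le, hyt.le.trans (hηmin x ⟨hx0, hxΛ.le⟩)⟩
    rw [pxx_eq hΨ]
    exact hle
  have hpyyΛ : ∀ y ∈ Ioo (0:ℝ) t, γ ≤ pyy ψ Λ y := by
    intro y hy
    have := sol.laplace Λ y hy.1 hy.2
    have h2 := hpxxΛ y hy
    linarith
  -- φ := py - γ y is monotone on the trough line
  have hφd : ∀ y : ℝ, HasDerivAt (fun y => py ψ Λ y - γ * y) (Dy B (Λ, y) - γ * 1) y := by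
    intro y
    have h0 : (fun y => py ψ Λ y) = fun y => B (Λ, y) := funext fun y => py_eq hΨ Λ y
    have h1 : HasDerivAt (fun y => py ψ Λ y) (Dy B (Λ, y)) y := by
      rw [h0]
      exact sliceY B hBs Λ y
    exact h1.sub ((hasDerivAt_id y).const_mul γ)
  have hφmono : MonotoneOn (fun y => py ψ Λ y - γ * y) (Icc 0 t) := by
    refine monotoneOn_of_deriv_nonneg (convex_Icc _ _) ?_ ?_ ?_
    · exact fun y _ => (hφd y).continuousAt.continuousWithinAt
    · exact fun y _ => (hφd y).differentiableAt.differentiableWithinAt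
    · intro y hy
      rw [interior_Icc] at hy
      rw [(hφd y).deriv]
      have heq : pyy ψ Λ y = Dy B (Λ, y) := pyy_eq hΨ Λ y
      have h2 := hpyyΛ y hy
      rw [heq] at h2
      linarith
  have hF1 : κ + γ * t ≤ S := by
    have := hφmono ⟨le_refl 0, ht.le⟩ ⟨ht.le, le_refl t⟩ ht.le
    simp only [mul_zero] at this
    linarith
  -- comparison function H
  have hF2 : 1 ≤ S * t - γ * t ^ 2 / 2 := by
    set H : ℝ → ℝ := fun y => (S - γ * t) * y + γ / 2 * y ^ 2 - ψ Λ y with hHdef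
    have hHd : ∀ y : ℝ, HasDerivAt H ((S - γ * t) + γ / 2 * (2 * y) - py ψ Λ y) y := by
      intro y
      have h1 : HasDerivAt (fun y : ℝ => (S - γ * t) * y) (S - γ * t) y := by
        simpa using (hasDerivAt_id y).const_mul (S - γ * t)
      have h2 : HasDerivAt (fun y : ℝ => γ / 2 * y ^ 2) (γ / 2 * (2 * y)) y := by
        have := (hasDerivAt_pow 2 y).const_mul (γ / 2)
        exact this.congr_deriv (by rw [show (2:ℕ) - 1 = 1 from rfl]; push_cast; ring)
      have h3 : HasDerivAt (fun y => ψ Λ y) (py ψ Λ y) y := by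
        have := sliceY Ψ hΨ Λ y
        rw [← py_eq hΨ Λ y] at this
        exact this
      exact (h1.add h2).sub h3
    have hHmono : MonotoneOn H (Icc 0 t) := by
      refine monotoneOn_of_deriv_nonneg (convex_Icc _ _) ?_ ?_ ?_
      · intro y _
        exact (hHd y).continuousAt.continuousWithinAt
      · intro y _
        exact (hHd y).differentiableAt.differentiableWithinAt
      · intro y hy
        rw [interior_Icc] at hy
        rw [(hHd y).deriv]
        have hmm := hφmono ⟨hy.1.le, hy.2.le⟩ ⟨ht.le, le_refl t⟩ hy.2.le
        dsimp only at hmm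
        rw [← hSdef] at hmm
        linarith
    have h0t := hHmono ⟨le_refl 0, ht.le⟩ ⟨ht.le, le_refl t⟩ ht.le
    have hH0 : H 0 = 0 := by
      simp [hHdef, sol.bottom_val Λ]
    have hHt : H t = (S - γ * t) * t + γ / 2 * t ^ 2 - 1 := by
      simp only [hHdef]
      rw [htdef, sol.surface_val Λ]
    rw [hH0, hHt] at h0t
    nlinarith [h0t]
  -- Bernoulli at the trough
  have hbern := sol.bernoulli Λ
  have hpxΛη : px ψ Λ (η Λ) = 0 := by
    rw [px_eq hΨ]
    exact hAright (η Λ)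
  rw [hpxΛη] at hbern
  have hS2 : S ^ 2 = 2 * r - 2 * t := by
    have : (0:ℝ) ^ 2 / 2 + S ^ 2 / 2 + t = r := by
      rw [hSdef, htdef]
      exact hbern
    nlinarith [this]
  -- upper bound on r
  have hd0eq : bernR γ 0 = γ + Real.sqrt (2 * γ) / γ := by
    rw [bernR, lamDepth]
    norm_num
  set d0 : ℝ := Real.sqrt (2 * γ) / γ with hd0def
  have hsq : Real.sqrt (2 * γ) ^ 2 = 2 * γ := Real.sq_sqrt (by linarith)
  have hsqpos : 0 < Real.sqrt (2 * γ) := Real.sqrt_pos.2 (by linarith)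
  have hd0pos : 0 < d0 := div_pos hsqpos hγ
  have hγd0 : γ * d0 ^ 2 = 2 := by
    rw [hd0def, div_pow, hsq]
    field_simp
  have hrup : r ≤ γ + d0 := by
    rw [hd0eq] at hupp
    linarith
  -- final algebra
  have hκ4 : κ ≤ 4 / γ := algebra_step hγ ht hd0pos hγd0 hF1 hF2 hS2 hrup
  intro x
  calc py ψ x 0 ≤ κ := hfold x
    _ ≤ 4 / γ := hκ4

end MainEstimate
/-- Proposition 2.3: for large `γ`, the vertical velocity at the bottom satisfies
`ψ_y(x, 0) ≤ C₀/γ` uniformly in `x`. -/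
theorem bottom_velocity_bound :
    ∃ C₀ > (0 : ℝ), ∃ γ₀ > (0 : ℝ), ∀ γ > γ₀,
      ∀ (ψ : ℝ → ℝ → ℝ) (η : ℝ → ℝ) (r Λ sc : ℝ),
        StokesWave γ ψ η r Λ → Unidirectional ψ η → IsCrit γ sc →
        bernR γ sc < r → r < bernR γ 0 →
        ∀ x : ℝ, py ψ x 0 ≤ C₀ / γ := by
  refine ⟨4, by norm_num, 1, by norm_num, ?_⟩
  intro γ hγ ψ η r Λ sc hSW hUni _ _ hupp x
  exact key_estimate (by linarith) hSW hUni hupp x
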